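/- arXiv:2305.11381 — 6 statements merged into one kernel-verified Lean document; each statement's English description precedes it below -/
import Mathlib

section
/- Let C be a nonempty set, r : C → ℝ, and let l_1, …, l_K : C → ℝ be cost functions for K content creators. Fix 0 ≤ α < α' ≤ 1. For each k ∈ {1,…,K}, suppose c_k ∈ C satisfies α·r(c_k) − l_k(c_k) ≥ α·r(c) − l_k(c) for all c ∈ C, and c'_k ∈ C satisfies α'·r(c'_k) − l_k(c'_k) ≥ α'·r(c) − l_k(c) for all c ∈ C. Define u_r(α) = (1−α)·∑_{k=1}^K r(c_k) and u_r(α') = (1−α')·∑_{k=1}^K r(c'_k). Then (1−α')·u_r(α) ≤ (1−α)·u_r(α'), i.e., u_r(α)/(1−α) ≤ u_r(α')/(1−α'). -/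
/-- In the full-recommendation return-based contract setting with `K` content creators:
if each `c k` is a best response of creator `k` (with cost `l k`) to the linear contract `α`,
and each `c' k` is a best response to `α'`, with `0 ≤ α < α' ≤ 1`, then with
`u_r(α) = (1-α) ∑_k r (c k)` and `u_r(α') = (1-α') ∑_k r (c' k)` one has
`(1-α') u_r(α) ≤ (1-α) u_r(α')`, i.e. `u_r(α)/(1-α) ≤ u_r(α')/(1-α')`. -/
theorem return_contract_utility_monotone {C : Type*} [Nonempty C]
    (K : ℕ) (hK : 0 < K)
    (r : C → ℝ) (l : Fin K → C → ℝ) (α α' : ℝ)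
    (hα : 0 ≤ α) (hαα' : α < α') (hα' : α' ≤ 1)
    (c c' : Fin K → C)
    (hc : ∀ k : Fin K, ∀ x : C, α * r x - l k x ≤ α * r (c k) - l k (c k))
    (hc' : ∀ k : Fin K, ∀ x : C, α' * r x - l k x ≤ α' * r (c' k) - l k (c' k)) :
    (1 - α') * ((1 - α) * ∑ k, r (c k)) ≤ (1 - α) * ((1 - α') * ∑ k, r (c' k)) := by
  have hsum : ∑ k, r (c k) ≤ ∑ k, r (c' k) := by
    apply Finset.sum_le_sum
    intro k _
    have h1 := hc k (c' k)
    have h2 := hc' k (c k)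
    have hd : (α' - α) * r (c k) ≤ (α' - α) * r (c' k) := by nlinarith
    exact le_of_mul_le_mul_left hd (by linarith)
  have h1 : (0:ℝ) ≤ 1 - α' := by linarith
  have h2 : (0:ℝ) ≤ 1 - α := by linarith
  nlinarith [mul_le_mul_of_nonneg_left hsum (mul_nonneg h1 h2)]
end

section
/- Let d ≥ 1 and let C be a nonempty subset of the closed unit ball of the Euclidean space ℝ^d, and let l : ℝ^d → ℝ be a cost function. Fix vectors u, θ, η ∈ ℝ^d and a real number α with 0 < α ≤ 1, and set γ = α·(u − θ) + η. Suppose c₁ ∈ C satisfies ⟨θ, c₁⟩ − l(c₁) ≥ ⟨θ, c⟩ − l(c) for all c ∈ C, and c₂ ∈ C satisfies ⟨θ + γ, c₂⟩ − l(c₂) ≥ ⟨θ + γ, c⟩ − l(c) for all c ∈ C. Then ⟨u − θ, c₁⟩ − ⟨u − θ − γ, c₂⟩ ≤ 2·(‖γ‖ + ‖η‖/α). -/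
open scoped RealInnerProductSpace

/-- Continuity of the principal's utility for linear feature-based contracts
(Lemma: continuity of the utility function). With `C` contained in the closed unit ball,
`γ = α • (u - θ) + η` for `0 < α ≤ 1`, `c₁` a best response to `θ` and `c₂` a best response
to `θ + γ`, we have `⟪u - θ, c₁⟫ - ⟪u - θ - γ, c₂⟫ ≤ 2(‖γ‖ + ‖η‖/α)`. -/
theorem linear_contract_utility_continuity
    (d : ℕ) (hd : 1 ≤ d)
    (C : Set (EuclideanSpace ℝ (Fin d))) (hC : C.Nonempty)
    (hCball : C ⊆ Metric.closedBall (0 : EuclideanSpace ℝ (Fin d)) 1)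
    (l : EuclideanSpace ℝ (Fin d) → ℝ)
    (u θ η : EuclideanSpace ℝ (Fin d)) (α : ℝ) (hα0 : 0 < α) (hα1 : α ≤ 1)
    (γ : EuclideanSpace ℝ (Fin d)) (hγ : γ = α • (u - θ) + η)
    (c₁ c₂ : EuclideanSpace ℝ (Fin d)) (hc₁C : c₁ ∈ C) (hc₂C : c₂ ∈ C)
    (h₁ : ∀ c ∈ C, ⟪θ, c⟫ - l c ≤ ⟪θ, c₁⟫ - l c₁)
    (h₂ : ∀ c ∈ C, ⟪θ + γ, c⟫ - l c ≤ ⟪θ + γ, c₂⟫ - l c₂) :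
    ⟪u - θ, c₁⟫ - ⟪u - θ - γ, c₂⟫ ≤ 2 * (‖γ‖ + ‖η‖ / α) := by
  have hn1 : ‖c₁‖ ≤ 1 := by simpa using hCball hc₁C
  have hn2 : ‖c₂‖ ≤ 1 := by simpa using hCball hc₂C
  -- best-response exchange: ⟪γ, c₁ - c₂⟫ ≤ 0
  have ha := h₁ c₂ hc₂C
  have hb := h₂ c₁ hc₁C
  have key : ⟪γ, c₁ - c₂⟫ ≤ 0 := by
    simp only [inner_add_left, inner_sub_right] at ha hb ⊢
    linarith
  -- u - θ = α⁻¹ • (γ - η)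
  have huθ : u - θ = (α⁻¹ : ℝ) • (γ - η) := by
    have h : γ - η = α • (u - θ) := by rw [hγ]; abel
    rw [h, inv_smul_smul₀ hα0.ne']
  -- inner product bounds
  have heta : -⟪η, c₁ - c₂⟫ ≤ 2 * ‖η‖ := by
    have h1 := abs_real_inner_le_norm η (c₁ - c₂)
    have h2 : ‖c₁ - c₂‖ ≤ 2 := by
      calc ‖c₁ - c₂‖ ≤ ‖c₁‖ + ‖c₂‖ := norm_sub_le _ _
        _ ≤ 2 := by linarith
    have h3 : ‖η‖ * ‖c₁ - c₂‖ ≤ ‖η‖ * 2 :=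
      mul_le_mul_of_nonneg_left h2 (norm_nonneg _)
    have h4 := neg_abs_le ⟪η, c₁ - c₂⟫
    linarith
  have hmain : ⟪u - θ, c₁ - c₂⟫ ≤ 2 * ‖η‖ / α := by
    rw [huθ, real_inner_smul_left, inner_sub_left]
    rw [div_eq_inv_mul]
    have := mul_le_mul_of_nonneg_left (by linarith : ⟪γ, c₁ - c₂⟫ - ⟪η, c₁ - c₂⟫ ≤ 2 * ‖η‖)
      (le_of_lt (inv_pos.mpr hα0))
    linarith
  have hγc2 : ⟪γ, c₂⟫ ≤ ‖γ‖ := by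
    have h1 := real_inner_le_norm γ c₂
    have h2 : ‖γ‖ * ‖c₂‖ ≤ ‖γ‖ * 1 := mul_le_mul_of_nonneg_left hn2 (norm_nonneg _)
    linarith
  have hsplit : ⟪u - θ, c₁⟫ - ⟪u - θ - γ, c₂⟫ = ⟪u - θ, c₁ - c₂⟫ + ⟪γ, c₂⟫ := by
    simp only [inner_sub_left, inner_sub_right]; ring
  have hγnn : (0:ℝ) ≤ ‖γ‖ := norm_nonneg _
  have hdiv : 2 * ‖η‖ / α = 2 * (‖η‖ / α) := by ring
  linarith [hsplit, hmain, hγc2]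
end

section
/- Let d ≥ 1 and let C be a nonempty subset of the closed unit ball of the Euclidean space ℝ^d, and let l : ℝ^d → ℝ be a cost function. Fix vectors u, θ, η ∈ ℝ^d and a real number α with 0 < α ≤ 1, and set γ = α·(u − θ) + η. Suppose c₁ ∈ C satisfies ⟨θ, c₁⟩ − l(c₁) ≥ ⟨θ, c⟩ − l(c) for all c ∈ C, and c₂ ∈ C satisfies ⟨θ + γ, c₂⟩ − l(c₂) ≥ ⟨θ + γ, c⟩ − l(c) for all c ∈ C. Then ⟨c₁ − c₂, u − θ⟩ ≤ 2·‖η‖/α. -/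
open scoped RealInnerProductSpace

/-- Linear feature-based contract, full recommendation: with `C` contained in the closed
unit ball, `γ = α • (u - θ) + η` for `0 < α ≤ 1`, `c₁` a best response to `θ` and `c₂` a
best response to `θ + γ`, we have `⟪c₁ - c₂, u - θ⟫ ≤ 2‖η‖/α`. -/
theorem linear_contract_best_response_shift
    (d : ℕ) (hd : 1 ≤ d)
    (C : Set (EuclideanSpace ℝ (Fin d))) (hC : C.Nonempty)
    (hCball : C ⊆ Metric.closedBall (0 : EuclideanSpace ℝ (Fin d)) 1)
    (l : EuclideanSpace ℝ (Fin d) → ℝ)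
    (u θ η : EuclideanSpace ℝ (Fin d)) (α : ℝ) (hα0 : 0 < α) (hα1 : α ≤ 1)
    (γ : EuclideanSpace ℝ (Fin d)) (hγ : γ = α • (u - θ) + η)
    (c₁ c₂ : EuclideanSpace ℝ (Fin d)) (hc₁C : c₁ ∈ C) (hc₂C : c₂ ∈ C)
    (h₁ : ∀ c ∈ C, ⟪θ, c⟫ - l c ≤ ⟪θ, c₁⟫ - l c₁)
    (h₂ : ∀ c ∈ C, ⟪θ + γ, c⟫ - l c ≤ ⟪θ + γ, c₂⟫ - l c₂) :
    ⟪c₁ - c₂, u - θ⟫ ≤ 2 * ‖η‖ / α := by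
  have A := h₁ c₂ hc₂C
  have B := h₂ c₁ hc₁C
  -- Summing: ⟪γ, c₁ - c₂⟫ ≤ 0
  have hg : ⟪γ, c₁ - c₂⟫ ≤ 0 := by
    have : ⟪θ + γ, c₁⟫ + ⟪θ, c₂⟫ ≤ ⟪θ + γ, c₂⟫ + ⟪θ, c₁⟫ := by linarith
    simp only [inner_add_left, inner_sub_right] at this ⊢
    linarith
  have hsub : ⟪γ, c₁ - c₂⟫ = α * ⟪u - θ, c₁ - c₂⟫ + ⟪η, c₁ - c₂⟫ := by
    rw [hγ, inner_add_left, real_inner_smul_left]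
  have hnorm : ⟪η, c₁ - c₂⟫ ≥ -(2 * ‖η‖) := by
    have h1 : ‖c₁‖ ≤ 1 := by simpa using hCball hc₁C
    have h2 : ‖c₂‖ ≤ 1 := by simpa using hCball hc₂C
    have hcs := abs_real_inner_le_norm η (c₁ - c₂)
    have hn : ‖c₁ - c₂‖ ≤ 2 := by
      calc ‖c₁ - c₂‖ ≤ ‖c₁‖ + ‖c₂‖ := norm_sub_le _ _
        _ ≤ 2 := by linarith
    have : |⟪η, c₁ - c₂⟫| ≤ ‖η‖ * 2 := by
      calc |⟪η, c₁ - c₂⟫| ≤ ‖η‖ * ‖c₁ - c₂‖ := hcs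
        _ ≤ ‖η‖ * 2 := by
          exact mul_le_mul_of_nonneg_left hn (norm_nonneg _)
    have := abs_le.mp this
    linarith [this.1]
  have key : α * ⟪u - θ, c₁ - c₂⟫ ≤ 2 * ‖η‖ := by
    have := hsub ▸ hg
    linarith
  have : ⟪u - θ, c₁ - c₂⟫ ≤ 2 * ‖η‖ / α := by
    rw [le_div_iff₀ hα0]
    linarith [key]
  rw [real_inner_comm]
  exact this
end

section
/- Let d, K, M be positive integers, let L₁, L₂, L₃ ≥ 0 and ε > 0, and let C be a nonempty subset of ℝ^d. For each user j ∈ {1,…,M} let r_j : ℝ^d → [0,1] satisfy |r_j(c) − r_j(c'')| ≤ L₁·‖c − c''‖ for all c, c'' ∈ C. Let g, g' : ℝ^d → ℝ be such that g' is L₂-Lipschitz on C and |g(c) − g'(c)| ≤ ε for all c ∈ C. For each k ∈ {1,…,K}, let c_k, c'_k ∈ C satisfy ‖c_k − c'_k‖ ≤ L₃·ε. Let Π be the set of recommendation policies π assigning to each user j a subset π(j) ⊆ {1,…,K} of size exactly S (with S ≤ K), and define U(g, (c_k)_k, π) = ∑_{j=1}^M ∑_{k ∈ π(j)} r_j(c_k)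 − ∑_{k=1}^K g(c_k). Then if π ∈ Π maximizes U(g, (c_k)_k, ·) over Π and π' ∈ Π maximizes U(g', (c'_k)_k, ·) over Π, one has U(g, (c_k)_k, π) − U(g', (c'_k)_k, π') ≤ K·(M·L₁·L₃ + L₂·L₃ + 1)·ε. -/
/-! Since `π` is feasible for the second problem, optimality of `π'` gives
`U(g', cs', π) ≤ U(g', cs', π')`, so it suffices to compare the two utilities at the common
policy `π`. There each of the at most `M K` recommended rewards moves by at most `L₁ L₃ ε`, and
each of the `K` payments by at most `L₂ L₃ ε + ε`. -/

open Finset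

section
variable {E : Type*} [SeminormedAddCommGroup E]

theorem abs_sub_le_of_lipschitzOn_of_norm_sub_le {C : Set E} {f : E → ℝ} {L δ : ℝ}
    (hL : 0 ≤ L) (hf : ∀ c ∈ C, ∀ c'' ∈ C, |f c - f c''| ≤ L * ‖c - c''‖)
    {x y : E} (hx : x ∈ C) (hy : y ∈ C) (hxy : ‖x - y‖ ≤ δ) :
    |f x - f y| ≤ L * δ :=
  (hf x hx y hy).trans (mul_le_mul_of_nonneg_left hxy hL)

theorem sub_le_of_lipschitzOn_of_abs_sub_le {C : Set E} {f g : E → ℝ} {L δ ε : ℝ}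
    (hL : 0 ≤ L) (hf : ∀ c ∈ C, ∀ c'' ∈ C, |f c - f c''| ≤ L * ‖c - c''‖)
    (hfg : ∀ c ∈ C, |g c - f c| ≤ ε)
    {x y : E} (hx : x ∈ C) (hy : y ∈ C) (hxy : ‖x - y‖ ≤ δ) :
    f y - g x ≤ L * δ + ε := by
  have hf_move : |f y - f x| ≤ L * δ :=
    abs_sub_le_of_lipschitzOn_of_norm_sub_le hL hf hy hx (by rwa [norm_sub_rev])
  linarith [le_of_abs_le hf_move, (abs_le.mp (hfg x hx)).1]

end

theorem sum_sub_sum_le_sum_abs_sub {κ : Type*} [Fintype κ] (s : Finset κ) (a b : κ → ℝ) :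
    ∑ k ∈ s, a k - ∑ k ∈ s, b k ≤ ∑ k, |a k - b k| := by
  rw [← sum_sub_distrib]
  calc ∑ k ∈ s, (a k - b k) ≤ ∑ k ∈ s, |a k - b k| := sum_le_sum fun k _ => le_abs_self _
    _ ≤ ∑ k, |a k - b k| :=
      sum_le_sum_of_subset_of_nonneg (subset_univ s) fun k _ _ => abs_nonneg _

theorem sum_sum_sub_sum_sum_le {ι κ : Type*} [Fintype ι] [Fintype κ] (q : ι → Finset κ)
    (a b : ι → κ → ℝ) {δ : ℝ} (h : ∀ i k, |a i k - b i k| ≤ δ) :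
    ∑ i, ∑ k ∈ q i, a i k - ∑ i, ∑ k ∈ q i, b i k
      ≤ Fintype.card ι * Fintype.card κ * δ := by
  rw [← sum_sub_distrib]
  calc ∑ i, (∑ k ∈ q i, a i k - ∑ k ∈ q i, b i k) ≤ ∑ i : ι, ∑ k : κ, δ :=
        sum_le_sum fun i _ =>
          (sum_sub_sum_le_sum_abs_sub (q i) (a i) (b i)).trans (sum_le_sum fun k _ => h i k)
    _ = Fintype.card ι * Fintype.card κ * δ := by simp [mul_assoc]

theorem feature_contract_discretization_bound_general
    (d K M S : ℕ)
    (L₁ L₂ L₃ ε : ℝ) (hL₁ : 0 ≤ L₁) (hL₂ : 0 ≤ L₂)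
    (C : Set (EuclideanSpace ℝ (Fin d)))
    (r : Fin M → EuclideanSpace ℝ (Fin d) → ℝ)
    (hr_lip : ∀ j, ∀ c ∈ C, ∀ c'' ∈ C, |r j c - r j c''| ≤ L₁ * ‖c - c''‖)
    (g g' : EuclideanSpace ℝ (Fin d) → ℝ)
    (hg'_lip : ∀ c ∈ C, ∀ c'' ∈ C, |g' c - g' c''| ≤ L₂ * ‖c - c''‖)
    (hgg' : ∀ c ∈ C, |g c - g' c| ≤ ε)
    (cs cs' : Fin K → EuclideanSpace ℝ (Fin d))
    (hcs : ∀ k, cs k ∈ C) (hcs' : ∀ k, cs' k ∈ C)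
    (hclose : ∀ k, ‖cs k - cs' k‖ ≤ L₃ * ε)
    (π π' : Fin M → Finset (Fin K))
    (hπ : ∀ j, (π j).card = S)
    (hπ'max : ∀ q : Fin M → Finset (Fin K), (∀ j, (q j).card = S) →
      (∑ j, ∑ k ∈ q j, r j (cs' k)) - (∑ k, g' (cs' k))
        ≤ (∑ j, ∑ k ∈ π' j, r j (cs' k)) - (∑ k, g' (cs' k))) :
    ((∑ j, ∑ k ∈ π j, r j (cs k)) - (∑ k, g (cs k)))
      - ((∑ j, ∑ k ∈ π' j, r j (cs' k)) - (∑ k, g' (cs' k)))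
      ≤ (K : ℝ) * (M * L₁ * L₃ + L₂ * L₃ + 1) * ε := by
  have hπ'_ge_π := hπ'max π hπ
  have hreward := sum_sum_sub_sum_sum_le π (fun j k => r j (cs k)) (fun j k => r j (cs' k))
    fun j k => abs_sub_le_of_lipschitzOn_of_norm_sub_le hL₁ (hr_lip j) (hcs k) (hcs' k) (hclose k)
  have hpayment : ∑ k, g' (cs' k) - ∑ k, g (cs k) ≤ K * (L₂ * (L₃ * ε) + ε) := by
    rw [← sum_sub_distrib]
    calc ∑ k, (g' (cs' k) - g (cs k)) ≤ ∑ _k : Fin K, (L₂ * (L₃ * ε) + ε) := sum_le_sum fun k _ =>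
          sub_le_of_lipschitzOn_of_abs_sub_le hL₂ hg'_lip hgg' (hcs k) (hcs' k) (hclose k)
      _ = K * (L₂ * (L₃ * ε) + ε) := by simp [mul_add]
  simp only [Fintype.card_fin] at hreward
  linear_combination hπ'_ge_π + hreward + hpayment

/-- Discretization error bound for the feature-based contract: with rewards `r j` lying in
`[0,1]` and `L₁`-Lipschitz on `C`, `g'` an `L₂`-Lipschitz contract with `|g - g'| ≤ ε` on
`C`, and contents `cs k, cs' k ∈ C` with `‖cs k - cs' k‖ ≤ L₃ ε`, if `π` maximizes the
utility `U(g, cs, ·)` and `π'` maximizes `U(g', cs', ·)` over policies recommending exactly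
`S` of the `K` items to each of the `M` users, then
`U(g, cs, π) - U(g', cs', π') ≤ K (M L₁ L₃ + L₂ L₃ + 1) ε`. -/
theorem feature_contract_discretization_bound
    (d K M S : ℕ) (hd : 0 < d) (hK : 0 < K) (hM : 0 < M) (hS : 0 < S) (hSK : S ≤ K)
    (L₁ L₂ L₃ ε : ℝ) (hL₁ : 0 ≤ L₁) (hL₂ : 0 ≤ L₂) (hL₃ : 0 ≤ L₃) (hε : 0 < ε)
    (C : Set (EuclideanSpace ℝ (Fin d))) (hC : C.Nonempty)
    (r : Fin M → EuclideanSpace ℝ (Fin d) → ℝ)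
    (hr_range : ∀ j, ∀ c ∈ C, r j c ∈ Set.Icc (0 : ℝ) 1)
    (hr_lip : ∀ j, ∀ c ∈ C, ∀ c'' ∈ C, |r j c - r j c''| ≤ L₁ * ‖c - c''‖)
    (g g' : EuclideanSpace ℝ (Fin d) → ℝ)
    (hg'_lip : ∀ c ∈ C, ∀ c'' ∈ C, |g' c - g' c''| ≤ L₂ * ‖c - c''‖)
    (hgg' : ∀ c ∈ C, |g c - g' c| ≤ ε)
    (cs cs' : Fin K → EuclideanSpace ℝ (Fin d))
    (hcs : ∀ k, cs k ∈ C) (hcs' : ∀ k, cs' k ∈ C)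
    (hclose : ∀ k, ‖cs k - cs' k‖ ≤ L₃ * ε)
    (π π' : Fin M → Finset (Fin K))
    (hπ : ∀ j, (π j).card = S) (hπ' : ∀ j, (π' j).card = S)
    (hπmax : ∀ q : Fin M → Finset (Fin K), (∀ j, (q j).card = S) →
      (∑ j, ∑ k ∈ q j, r j (cs k)) - (∑ k, g (cs k))
        ≤ (∑ j, ∑ k ∈ π j, r j (cs k)) - (∑ k, g (cs k)))
    (hπ'max : ∀ q : Fin M → Finset (Fin K), (∀ j, (q j).card = S) →
      (∑ j, ∑ k ∈ q j, r j (cs' k)) - (∑ k, g' (cs' k))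
        ≤ (∑ j, ∑ k ∈ π' j, r j (cs' k)) - (∑ k, g' (cs' k))) :
    ((∑ j, ∑ k ∈ π j, r j (cs k)) - (∑ k, g (cs k)))
      - ((∑ j, ∑ k ∈ π' j, r j (cs' k)) - (∑ k, g' (cs' k)))
      ≤ (K : ℝ) * (M * L₁ * L₃ + L₂ * L₃ + 1) * ε :=
  feature_contract_discretization_bound_general d K M S L₁ L₂ L₃ ε hL₁ hL₂ C r hr_lip g g' hg'_lip
    hgg' cs cs' hcs hcs' hclose π π' hπ hπ'max
end

section
/- Let I be a finite set, and let T and B be positive integers. For each round t ∈ {1,…,T} let P_t ⊆ I be a set of indices pulled at round t, with |P_t| ≤ B for every t. Then ∑_{t=1}^T ∑_{i ∈ P_t} 1/√(1 + #{s < t : i ∈ P_s}) ≤ 2·√(|I|·B·T). -/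
open Finset

lemma sum_one_div_sqrt_le (n : ℕ) :
    ∑ l ∈ Finset.range n, (1:ℝ) / Real.sqrt (1 + l) ≤ 2 * Real.sqrt n := by
  induction n with
  | zero => simp
  | succ n ih =>
    rw [Finset.sum_range_succ]
    have h1 : (0:ℝ) ≤ n := Nat.cast_nonneg n
    have hpos : 0 < Real.sqrt ((n:ℝ)+1) := Real.sqrt_pos.2 (by linarith)
    have key : 1 / Real.sqrt (1 + (n:ℝ)) ≤ 2 * Real.sqrt ((n:ℝ)+1) - 2 * Real.sqrt n := by
      rw [show (1:ℝ) + n = (n:ℝ)+1 by ring, div_le_iff₀ hpos]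
      nlinarith [Real.sq_sqrt (show (0:ℝ) ≤ (n:ℝ)+1 by linarith), Real.sq_sqrt h1,
        Real.sqrt_nonneg (n:ℝ), Real.sqrt_le_sqrt (show (n:ℝ) ≤ n+1 by linarith), hpos]
    push_cast
    linarith

/-- The counting bound underlying the UCB regret analysis: if at each round `t` a batch
`P t` of at most `B` indices from a finite set `I` is pulled, then the sum over rounds and
pulled indices of `1/√(1 + (number of previous rounds pulling that index))` is at most
`2 √(|I| B T)`. -/
theorem ucb_counting_bound {I : Type*} [Fintype I] [DecidableEq I]
    (T B : ℕ) (hT : 0 < T) (hB : 0 < B)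
    (P : Fin T → Finset I) (hP : ∀ t, (P t).card ≤ B) :
    ∑ t : Fin T, ∑ i ∈ P t,
        (1 : ℝ) / Real.sqrt
          (1 + ((Finset.univ.filter fun s : Fin T => s < t ∧ i ∈ P s).card : ℝ))
      ≤ 2 * Real.sqrt ((Fintype.card I : ℝ) * B * T) := by
  classical
  set c : I → Fin T → ℕ :=
    fun i t => (Finset.univ.filter fun s : Fin T => s < t ∧ i ∈ P s).card with hc
  set A : I → Finset (Fin T) := fun i => Finset.univ.filter (fun t => i ∈ P t) with hA
  set n : I → ℕ := fun i => (A i).card with hn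
  -- swap sums
  have hswap : ∑ t : Fin T, ∑ i ∈ P t, (1:ℝ) / Real.sqrt (1 + (c i t : ℝ))
      = ∑ i : I, ∑ t ∈ A i, (1:ℝ) / Real.sqrt (1 + (c i t : ℝ)) := by
    have : ∀ t : Fin T, ∑ i ∈ P t, (1:ℝ) / Real.sqrt (1 + (c i t : ℝ))
        = ∑ i : I, if i ∈ P t then (1:ℝ) / Real.sqrt (1 + (c i t : ℝ)) else 0 := by
      intro t
      rw [Finset.sum_ite_mem, Finset.univ_inter]
    simp_rw [this]
    rw [Finset.sum_comm]
    congr 1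
    ext i
    rw [Finset.sum_filter]
  rw [hswap]
  -- per-index bound
  have hper : ∀ i : I, ∑ t ∈ A i, (1:ℝ) / Real.sqrt (1 + (c i t : ℝ))
      ≤ 2 * Real.sqrt (n i) := by
    intro i
    have hmono : ∀ t1 ∈ A i, ∀ t2 ∈ A i, t1 < t2 → c i t1 < c i t2 := by
      intro t1 h1 t2 h2 hlt
      apply Finset.card_lt_card
      rw [Finset.ssubset_iff_of_subset]
      · exact ⟨t1, by simp [hA] at h1; simp [hlt, h1], by simp⟩
      · intro s hs
        simp only [Finset.mem_filter, Finset.mem_univ, true_and] at hs ⊢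
        exact ⟨hs.1.trans hlt, hs.2⟩
    have hinj : Set.InjOn (c i) (A i) := by
      intro t1 h1 t2 h2 heq
      by_contra hne
      rcases lt_or_gt_of_ne hne with h | h
      · exact absurd heq (Nat.ne_of_lt (hmono t1 h1 t2 h2 h))
      · exact absurd heq.symm (Nat.ne_of_lt (hmono t2 h2 t1 h1 h))
    have hbound : ∀ t ∈ A i, c i t < n i := by
      intro t ht
      apply Finset.card_lt_card
      rw [Finset.ssubset_iff_of_subset]
      · exact ⟨t, by simpa [hA] using ht, by simp⟩
      · intro s hs
        simp only [Finset.mem_filter, Finset.mem_univ, true_and, hA] at hs ⊢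
        exact hs.2
    calc ∑ t ∈ A i, (1:ℝ) / Real.sqrt (1 + (c i t : ℝ))
        = ∑ l ∈ (A i).image (c i), (1:ℝ) / Real.sqrt (1 + (l : ℝ)) := by
          rw [Finset.sum_image (fun t1 h1 t2 h2 => hinj h1 h2)]
      _ ≤ ∑ l ∈ Finset.range (n i), (1:ℝ) / Real.sqrt (1 + (l : ℝ)) := by
          apply Finset.sum_le_sum_of_subset_of_nonneg
          · intro l hl
            rw [Finset.mem_image] at hl
            obtain ⟨t, ht, rfl⟩ := hl
            exact Finset.mem_range.2 (hbound t ht)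
          · intro l _ _
            positivity
      _ ≤ 2 * Real.sqrt (n i) := sum_one_div_sqrt_le (n i)
  calc ∑ i : I, ∑ t ∈ A i, (1:ℝ) / Real.sqrt (1 + (c i t : ℝ))
      ≤ ∑ i : I, 2 * Real.sqrt (n i) := Finset.sum_le_sum (fun i _ => hper i)
    _ = 2 * ∑ i : I, Real.sqrt (n i) := by rw [Finset.mul_sum]
    _ ≤ 2 * Real.sqrt ((Fintype.card I : ℝ) * B * T) := by
        gcongr 2 * ?_
        have hsq : (∑ i : I, Real.sqrt (n i))^2
            ≤ (Fintype.card I : ℝ) * ∑ i : I, (n i : ℝ) := by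
          have := sq_sum_le_card_mul_sum_sq
            (s := (Finset.univ : Finset I)) (f := fun i => Real.sqrt (n i))
          simpa [Real.sq_sqrt (Nat.cast_nonneg _ : (0:ℝ) ≤ _)] using this
        have hsum : ∑ i : I, (n i : ℝ) ≤ (B : ℝ) * T := by
          have : ∑ i : I, n i = ∑ t : Fin T, (P t).card := by
            simp_rw [hn, hA, Finset.card_filter]
            rw [Finset.sum_comm]
            congr 1; ext t
            rw [← Finset.card_filter]
            simp
          have h2 : ∑ i : I, n i ≤ B * T := by
            rw [this]
            calc ∑ t : Fin T, (P t).card ≤ ∑ t : Fin T, B :=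
                  Finset.sum_le_sum (fun t _ => hP t)
              _ = B * T := by simp [Finset.sum_const, Nat.mul_comm]
          calc ∑ i : I, ((n i : ℝ)) = ((∑ i : I, n i : ℕ) : ℝ) := by push_cast; ring
            _ ≤ ((B * T : ℕ) : ℝ) := by exact_mod_cast h2
            _ = (B:ℝ) * T := by push_cast; ring
        have hnonneg : 0 ≤ ∑ i : I, Real.sqrt (n i) :=
          Finset.sum_nonneg (fun i _ => Real.sqrt_nonneg _)
        rw [← Real.sqrt_sq hnonneg]
        apply Real.sqrt_le_sqrt
        calc (∑ i : I, Real.sqrt (n i))^2 ≤ (Fintype.card I : ℝ) * ∑ i : I, (n i : ℝ) := hsq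
          _ ≤ (Fintype.card I : ℝ) * ((B:ℝ) * T) := by
              apply mul_le_mul_of_nonneg_left hsum (Nat.cast_nonneg _)
          _ = (Fintype.card I : ℝ) * B * T := by ring
end

section
/- Let d, K, M, S, T be positive integers with S ≤ K, let L₁, L₂, L₃ ≥ 0 and ε > 0, and let C be a nonempty subset of ℝ^d. For each j ∈ {1,…,M} let r_j : ℝ^d → [0,1] satisfy |r_j(c) − r_j(c'')| ≤ L₁·‖c − c''‖ for all c, c'' ∈ C. Let 𝒢 be a set of functions from C to ℝ, each L₂-Lipschitz on C, and for each k ∈ {1,…,K} let c_k : 𝒢 → C satisfy ‖c_k(g) − c_k(g')‖ ≤ L₃·sup_{c ∈ C} |g(c) − g'(c)| for all g, g' ∈ 𝒢. Let 𝒢_ε ⊆ 𝒢 be a finite subset such that for every g ∈ 𝒢 there exists g' ∈ 𝒢_ε with sup_{c ∈ C} |g(c) − g'(c)| ≤ ε. Let Π be the set of recommendation policies π assigning to each user j a subset π(j) ⊆ {1,…,K} of size exactly S, and define u(g, π) = ∑_{j=1}^M ∑_{k ∈ π(j)} r_j(c_k(g)) − ∑_{k=1}^K g(c_k(g)). Suppose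 for each t ∈ {1,…,T} we have û_t : 𝒢_ε × Π → ℝ with u(g, π) ≤ û_t(g, π) for all (g, π) ∈ 𝒢_ε × Π, and a pair (g_t, π_t) ∈ 𝒢_ε × Π with û_t(g_t, π_t) ≥ û_t(g, π) for all (g, π) ∈ 𝒢_ε × Π. Then for every g* ∈ 𝒢 and every π* ∈ Π, ∑_{t=1}^T ( u(g*, π*) − u(g_t, π_t) ) ≤ K·(M·L₁·L₃ + L₂·L₃ + 1)·ε·T + ∑_{t=1}^T ( û_t(g_t, π_t) − u(g_t, π_t) ). -/
/-- Deterministic core of the regret bound for the feature-based contract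
(Theorem 2, upper bound): rewards `r j` lie in `[0,1]` and are `L₁`-Lipschitz on `C`,
contracts in `G` are `L₂`-Lipschitz on `C`, content-generation maps `ck k` are
`L₃`-Lipschitz with respect to the sup-norm distance between contracts on `C`,
`Gε ⊆ G` is a finite `ε`-covering of `G` in sup norm on `C`, optimistic estimates
`uhat t` dominate the true utility
`u(g, π) = ∑_j ∑_{k ∈ π(j)} r j (ck k g) - ∑_k g (ck k g)` on `Gε` times valid policies,
and the greedy choices `(gsel t, πsel t)` maximize `uhat t` there. Then the cumulative
regret against any `g* ∈ G` and valid `π*` is at most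
`K (M L₁ L₃ + L₂ L₃ + 1) ε T + ∑_t (uhat t (gsel t) (πsel t) - u (gsel t) (πsel t))`. -/
theorem feature_contract_regret_decomposition
    (d K M S T : ℕ) (hd : 0 < d) (hK : 0 < K) (hM : 0 < M) (hS : 0 < S) (hSK : S ≤ K)
    (hT : 0 < T)
    (L₁ L₂ L₃ ε : ℝ) (hL₁ : 0 ≤ L₁) (hL₂ : 0 ≤ L₂) (hL₃ : 0 ≤ L₃) (hε : 0 < ε)
    (C : Set (EuclideanSpace ℝ (Fin d))) (hC : C.Nonempty)
    (r : Fin M → EuclideanSpace ℝ (Fin d) → ℝ)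
    (hr_range : ∀ j, ∀ c ∈ C, r j c ∈ Set.Icc (0 : ℝ) 1)
    (hr_lip : ∀ j, ∀ c ∈ C, ∀ c'' ∈ C, |r j c - r j c''| ≤ L₁ * ‖c - c''‖)
    (G : Set (EuclideanSpace ℝ (Fin d) → ℝ))
    (hG_lip : ∀ g ∈ G, ∀ c ∈ C, ∀ c'' ∈ C, |g c - g c''| ≤ L₂ * ‖c - c''‖)
    (ck : Fin K → (EuclideanSpace ℝ (Fin d) → ℝ) → EuclideanSpace ℝ (Fin d))
    (hck_mem : ∀ k, ∀ g ∈ G, ck k g ∈ C)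
    (hck_lip : ∀ k, ∀ g ∈ G, ∀ g' ∈ G, ∀ D : ℝ, (∀ c ∈ C, |g c - g' c| ≤ D) →
      ‖ck k g - ck k g'‖ ≤ L₃ * D)
    (Gε : Set (EuclideanSpace ℝ (Fin d) → ℝ)) (hGεfin : Gε.Finite) (hGεsub : Gε ⊆ G)
    (hGεcover : ∀ g ∈ G, ∃ g' ∈ Gε, ∀ c ∈ C, |g c - g' c| ≤ ε)
    (uhat : Fin T → (EuclideanSpace ℝ (Fin d) → ℝ) → (Fin M → Finset (Fin K)) → ℝ)
    (hdom : ∀ t : Fin T, ∀ g ∈ Gε, ∀ q : Fin M → Finset (Fin K), (∀ j, (q j).card = S) →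
      (∑ j, ∑ k ∈ q j, r j (ck k g)) - (∑ k, g (ck k g)) ≤ uhat t g q)
    (gsel : Fin T → EuclideanSpace ℝ (Fin d) → ℝ)
    (πsel : Fin T → Fin M → Finset (Fin K))
    (hgsel : ∀ t, gsel t ∈ Gε) (hπsel : ∀ t j, (πsel t j).card = S)
    (hopt : ∀ t : Fin T, ∀ g ∈ Gε, ∀ q : Fin M → Finset (Fin K), (∀ j, (q j).card = S) →
      uhat t g q ≤ uhat t (gsel t) (πsel t)) :
    ∀ gstar ∈ G, ∀ πstar : Fin M → Finset (Fin K), (∀ j, (πstar j).card = S) →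
      ∑ t : Fin T,
          (((∑ j, ∑ k ∈ πstar j, r j (ck k gstar)) - (∑ k, gstar (ck k gstar)))
            - ((∑ j, ∑ k ∈ πsel t j, r j (ck k (gsel t)))
                - (∑ k, (gsel t) (ck k (gsel t)))))
        ≤ (K : ℝ) * (M * L₁ * L₃ + L₂ * L₃ + 1) * ε * T
          + ∑ t : Fin T,
              (uhat t (gsel t) (πsel t)
                - ((∑ j, ∑ k ∈ πsel t j, r j (ck k (gsel t)))
                    - (∑ k, (gsel t) (ck k (gsel t))))) := by
  intro gstar hgstar πstar hπstar
  obtain ⟨g', hg'ε, hg'cov⟩ := hGεcover gstar hgstar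
  have hg'G : g' ∈ G := hGεsub hg'ε
  set B : ℝ := (K : ℝ) * (M * L₁ * L₃ + L₂ * L₃ + 1) * ε with hB
  -- content distance bound
  have hckdist : ∀ k : Fin K, ‖ck k gstar - ck k g'‖ ≤ L₃ * ε :=
    fun k => hck_lip k gstar hgstar g' hg'G ε hg'cov
  -- key per-round bound: u(gstar, πstar) ≤ u(g', πstar) + B
  have hkey : ((∑ j, ∑ k ∈ πstar j, r j (ck k gstar)) - (∑ k, gstar (ck k gstar)))
      ≤ ((∑ j, ∑ k ∈ πstar j, r j (ck k g')) - (∑ k, g' (ck k g'))) + B := by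
    have hrew : ∀ j, ∀ k : Fin K,
        r j (ck k gstar) - r j (ck k g') ≤ L₁ * (L₃ * ε) := by
      intro j k
      have h1 := hr_lip j (ck k gstar) (hck_mem k gstar hgstar) (ck k g') (hck_mem k g' hg'G)
      have h2 : r j (ck k gstar) - r j (ck k g') ≤ L₁ * ‖ck k gstar - ck k g'‖ :=
        le_trans (le_abs_self _) h1
      exact h2.trans (by nlinarith [hckdist k])
    have hpay : ∀ k : Fin K,
        g' (ck k g') - gstar (ck k gstar) ≤ ε + L₂ * (L₃ * ε) := by
      intro k
      have h1 : g' (ck k g') - gstar (ck k g') ≤ ε := by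
        have := hg'cov (ck k g') (hck_mem k g' hg'G)
        have habs : |g' (ck k g') - gstar (ck k g')| ≤ ε := by
          rw [abs_sub_comm]; exact this
        exact (le_abs_self _).trans habs
      have h2 : gstar (ck k g') - gstar (ck k gstar) ≤ L₂ * (L₃ * ε) := by
        have hlip := hG_lip gstar hgstar (ck k g') (hck_mem k g' hg'G)
          (ck k gstar) (hck_mem k gstar hgstar)
        have hnorm : ‖ck k g' - ck k gstar‖ ≤ L₃ * ε := by
          rw [norm_sub_rev]; exact hckdist k
        calc gstar (ck k g') - gstar (ck k gstar)
            ≤ |gstar (ck k g') - gstar (ck k gstar)| := le_abs_self _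
          _ ≤ L₂ * ‖ck k g' - ck k gstar‖ := hlip
          _ ≤ L₂ * (L₃ * ε) := by nlinarith
      linarith
    have hrewsum : (∑ j, ∑ k ∈ πstar j, r j (ck k gstar))
        - (∑ j, ∑ k ∈ πstar j, r j (ck k g'))
        ≤ (M : ℝ) * ((K : ℝ) * (L₁ * (L₃ * ε))) := by
      rw [← Finset.sum_sub_distrib]
      have hj : ∀ j ∈ Finset.univ, (∑ k ∈ πstar j, r j (ck k gstar))
          - (∑ k ∈ πstar j, r j (ck k g')) ≤ (K : ℝ) * (L₁ * (L₃ * ε)) := by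
        intro j _
        rw [← Finset.sum_sub_distrib]
        calc ∑ k ∈ πstar j, (r j (ck k gstar) - r j (ck k g'))
            ≤ ∑ _k ∈ πstar j, L₁ * (L₃ * ε) :=
              Finset.sum_le_sum (fun k _ => hrew j k)
          _ = (πstar j).card * (L₁ * (L₃ * ε)) := by
              rw [Finset.sum_const, nsmul_eq_mul]
          _ ≤ (K : ℝ) * (L₁ * (L₃ * ε)) := by
              have : ((πstar j).card : ℝ) ≤ (K : ℝ) := by
                rw [hπstar j]; exact_mod_cast hSK
              nlinarith [mul_nonneg hL₁ (mul_nonneg hL₃ hε.le)]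
      calc ∑ j, ((∑ k ∈ πstar j, r j (ck k gstar)) - (∑ k ∈ πstar j, r j (ck k g')))
          ≤ ∑ _j : Fin M, (K : ℝ) * (L₁ * (L₃ * ε)) := Finset.sum_le_sum hj
        _ = (M : ℝ) * ((K : ℝ) * (L₁ * (L₃ * ε))) := by
            rw [Finset.sum_const, nsmul_eq_mul, Finset.card_univ, Fintype.card_fin]
    have hpaysum : (∑ k, g' (ck k g')) - (∑ k, gstar (ck k gstar))
        ≤ (K : ℝ) * (ε + L₂ * (L₃ * ε)) := by
      rw [← Finset.sum_sub_distrib]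
      calc ∑ k, (g' (ck k g') - gstar (ck k gstar))
          ≤ ∑ _k : Fin K, (ε + L₂ * (L₃ * ε)) :=
            Finset.sum_le_sum (fun k _ => hpay k)
        _ = (K : ℝ) * (ε + L₂ * (L₃ * ε)) := by
            rw [Finset.sum_const, nsmul_eq_mul, Finset.card_univ, Fintype.card_fin]
    have hBeq : B = (M : ℝ) * ((K : ℝ) * (L₁ * (L₃ * ε))) + (K : ℝ) * (ε + L₂ * (L₃ * ε)) := by
      rw [hB]; ring
    linarith
  -- per-round bound via optimism
  have hround : ∀ t : Fin T,
      ((∑ j, ∑ k ∈ πstar j, r j (ck k gstar)) - (∑ k, gstar (ck k gstar)))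
        ≤ B + uhat t (gsel t) (πsel t) := by
    intro t
    have h1 := hdom t g' hg'ε πstar hπstar
    have h2 := hopt t g' hg'ε πstar hπstar
    linarith
  calc ∑ t : Fin T,
        (((∑ j, ∑ k ∈ πstar j, r j (ck k gstar)) - (∑ k, gstar (ck k gstar)))
          - ((∑ j, ∑ k ∈ πsel t j, r j (ck k (gsel t)))
              - (∑ k, (gsel t) (ck k (gsel t)))))
      ≤ ∑ t : Fin T,
        (B + uhat t (gsel t) (πsel t)
          - ((∑ j, ∑ k ∈ πsel t j, r j (ck k (gsel t)))
              - (∑ k, (gsel t) (ck k (gsel t))))) := by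
        apply Finset.sum_le_sum
        intro t _
        have := hround t
        linarith
    _ = (K : ℝ) * (M * L₁ * L₃ + L₂ * L₃ + 1) * ε * T
        + ∑ t : Fin T,
            (uhat t (gsel t) (πsel t)
              - ((∑ j, ∑ k ∈ πsel t j, r j (ck k (gsel t)))
                  - (∑ k, (gsel t) (ck k (gsel t))))) := by
        simp only [add_sub_assoc]
        rw [Finset.sum_add_distrib, Finset.sum_const, nsmul_eq_mul, Finset.card_univ,
          Fintype.card_fin, hB]
        ring
end
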